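/- arXiv:2204.03292 — 3 statements merged into one kernel-verified Lean document; each statement's English description precedes it below -/
import Mathlib

section
/- Let β, κ, γ > 0, let ω ∈ ℝ with |ω| ≥ 1, let u₁, u₂ ∈ ℂ, and let f, g : [0,1] → ℂ be twice continuously differentiable functions satisfying (iω + γ/β)·f(ξ) + κ·g''(ξ) = 0 and −(1/β)·f''(ξ) + iω·g(ξ) = 0 for all ξ ∈ [0,1], together with f(0) = β·u₁, f'(0) = β·u₂, g(1) = 0, g'(1) = 0. Then (1/β)·∫₀¹|f(ξ)|²dξ + κ·∫₀¹|g(ξ)|²dξ ≤ (2β/γ + 1)·‖(κ·g'(0), −κ·g(0))‖·‖(u₁, u₂)‖, where ‖·‖ denotes the Euclidean norm on ℂ². -/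
/-!
Pairing the first equation with `f` and the second with `βκ g` in `L²(0,1)` and integrating
by parts twice gives the energy identity `(iω + γ/β)∫|f|² - iωβκ∫|g|² = βZ` with
`Z = κ(g'(0) conj u₁ - g(0) conj u₂)`: the combined integrand `κ(g'' conj f - g conj f'')` has
the primitive `κ(g' conj f - g conj f')`, which vanishes at the free end. The real part gives
`(1/β)∫|f|² = (β/γ) Re Z` and the imaginary part `κ∫|g|² = (1/β)∫|f|² - Im Z / ω`, so for
`|ω| ≥ 1` the energy is at most `(2β/γ + 1)‖Z‖`; Cauchy–Schwarz bounds `‖Z‖` by the product of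
the two Euclidean norms.
-/

open Set Complex ComplexConjugate

lemma norm_mul_add_mul_le_sqrt_mul_sqrt {R : Type*} [SeminormedRing R] (a b c d : R) :
    ‖a * c + b * d‖ ≤ √(‖a‖ ^ 2 + ‖b‖ ^ 2) * √(‖c‖ ^ 2 + ‖d‖ ^ 2) := by
  have hcs := Real.sum_mul_le_sqrt_mul_sqrt Finset.univ ![‖a‖, ‖b‖] ![‖c‖, ‖d‖]
  simp only [Fin.sum_univ_two, Matrix.cons_val_zero, Matrix.cons_val_one] at hcs
  calc ‖a * c + b * d‖ ≤ ‖a‖ * ‖c‖ + ‖b‖ * ‖d‖ :=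
        (norm_add_le _ _).trans (add_le_add (norm_mul_le _ _) (norm_mul_le _ _))
    _ ≤ _ := hcs

theorem integral_eq_sub_of_hasDerivWithinAt_Icc {E : Type*} [NormedAddCommGroup E]
    [NormedSpace ℝ E] [CompleteSpace E] {F F' : ℝ → E} {a b : ℝ} (hab : a ≤ b)
    (hF : ∀ x ∈ Icc a b, HasDerivWithinAt F (F' x) (Icc a b) x)
    (hF' : ContinuousOn F' (Icc a b)) :
    ∫ x in a..b, F' x = F b - F a := by
  refine intervalIntegral.integral_eq_sub_of_hasDeriv_right_of_le hab
    (fun x hx ↦ (hF x hx).continuousWithinAt) (fun x hx ↦ ?_)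
    (hF'.intervalIntegrable_of_Icc hab)
  exact ((hF x (Ioo_subset_Icc_self hx)).hasDerivAt (Icc_mem_nhds hx.1 hx.2)).hasDerivWithinAt

theorem hasDerivWithinAt_mul_conj_sub_mul_conj {f f' f'' g g' g'' : ℝ → ℂ} {s : Set ℝ} {x : ℝ}
    (hf : HasDerivWithinAt f (f' x) s x) (hf' : HasDerivWithinAt f' (f'' x) s x)
    (hg : HasDerivWithinAt g (g' x) s x) (hg' : HasDerivWithinAt g' (g'' x) s x) :
    HasDerivWithinAt (fun y ↦ g' y * conj (f y) - g y * conj (f' y))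
      (g'' x * conj (f x) - g x * conj (f'' x)) s x :=
  ((hg'.mul hf.star).sub (hg.mul hf'.star)).congr_deriv (by simp only [starRingEnd_apply]; ring)

section Beam

variable {β κ γ ω : ℝ}

theorem beam_integrand_eq (hβ : β ≠ 0) {f f'' g g'' : ℂ}
    (hode1 : (I * ω + γ / β) * f + κ * g'' = 0) (hode2 : -(1 / (β : ℂ)) * f'' + I * ω * g = 0) :
    κ * (g'' * conj f - g * conj f'') =
      -(I * ω + γ / β) * ↑(‖f‖ ^ 2) + I * ω * β * κ * ↑(‖g‖ ^ 2) := by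
  have hβ' : (β : ℂ) ≠ 0 := ofReal_ne_zero.mpr hβ
  have hf'' : f'' = I * ω * β * g := by
    field_simp at hode2
    linear_combination -hode2
  rw [hf'', ofReal_pow, ofReal_pow, ← mul_conj', ← mul_conj']
  simp only [map_mul, conj_I, conj_ofReal]
  linear_combination conj f * hode1

theorem beam_energy_identity (hβ : β ≠ 0) {u₁ u₂ : ℂ} {f f' f'' g g' g'' : ℝ → ℂ}
    (hf' : ∀ ξ ∈ Icc (0:ℝ) 1, HasDerivWithinAt f (f' ξ) (Icc 0 1) ξ)
    (hf'' : ∀ ξ ∈ Icc (0:ℝ) 1, HasDerivWithinAt f' (f'' ξ) (Icc 0 1) ξ)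
    (hg' : ∀ ξ ∈ Icc (0:ℝ) 1, HasDerivWithinAt g (g' ξ) (Icc 0 1) ξ)
    (hg'' : ∀ ξ ∈ Icc (0:ℝ) 1, HasDerivWithinAt g' (g'' ξ) (Icc 0 1) ξ)
    (hode1 : ∀ ξ ∈ Icc (0:ℝ) 1, (I * ω + γ / β) * f ξ + κ * g'' ξ = 0)
    (hode2 : ∀ ξ ∈ Icc (0:ℝ) 1, -(1 / (β:ℂ)) * f'' ξ + I * ω * g ξ = 0)
    (hbc1 : f 0 = β * u₁) (hbc2 : f' 0 = β * u₂) (hbc3 : g 1 = 0) (hbc4 : g' 1 = 0) :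
    (I * ω + γ / β) * ↑(∫ ξ in (0:ℝ)..1, ‖f ξ‖ ^ 2) -
        I * ω * β * κ * ↑(∫ ξ in (0:ℝ)..1, ‖g ξ‖ ^ 2) =
      β * (κ * g' 0 * conj u₁ + -κ * g 0 * conj u₂) := by
  have hfc : ContinuousOn f (Icc 0 1) := fun ξ hξ ↦ (hf' ξ hξ).continuousWithinAt
  have hgc : ContinuousOn g (Icc 0 1) := fun ξ hξ ↦ (hg' ξ hξ).continuousWithinAt
  have hsq_cont : ∀ {h : ℝ → ℂ}, ContinuousOn h (Icc 0 1) →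
      ContinuousOn (fun ξ ↦ ((‖h ξ‖ ^ 2 : ℝ) : ℂ)) (Icc 0 1) :=
    fun hc ↦ continuous_ofReal.comp_continuousOn (hc.norm.pow 2)
  -- After the ODEs are used, the derivative is continuous without any regularity of `f'', g''`.
  have hprimitive : ∀ ξ ∈ Icc (0:ℝ) 1,
      HasDerivWithinAt (fun y ↦ κ * (g' y * conj (f y) - g y * conj (f' y)))
        (-(I * ω + γ / β) * ↑(‖f ξ‖ ^ 2) + I * ω * β * κ * ↑(‖g ξ‖ ^ 2)) (Icc 0 1) ξ := by
    intro ξ hξ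
    rw [← beam_integrand_eq hβ (hode1 ξ hξ) (hode2 ξ hξ)]
    exact (hasDerivWithinAt_mul_conj_sub_mul_conj (hf' ξ hξ) (hf'' ξ hξ) (hg' ξ hξ)
      (hg'' ξ hξ)).const_mul _
  have hftc := integral_eq_sub_of_hasDerivWithinAt_Icc zero_le_one hprimitive
    ((continuousOn_const.mul (hsq_cont hfc)).add (continuousOn_const.mul (hsq_cont hgc)))
  have hsq_integrable : ∀ {h : ℝ → ℂ}, ContinuousOn h (Icc 0 1) →
      IntervalIntegrable (fun ξ ↦ ((‖h ξ‖ ^ 2 : ℝ) : ℂ)) MeasureTheory.volume 0 1 :=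
    fun hc ↦ (hsq_cont hc).intervalIntegrable_of_Icc zero_le_one
  rw [intervalIntegral.integral_add ((hsq_integrable hfc).const_mul _)
      ((hsq_integrable hgc).const_mul _),
    intervalIntegral.integral_const_mul, intervalIntegral.integral_const_mul,
    intervalIntegral.integral_ofReal, intervalIntegral.integral_ofReal] at hftc
  simp only [hbc1, hbc2, hbc3, hbc4, map_mul, conj_ofReal] at hftc
  linear_combination -hftc

theorem beam_energy_le_of_identity (hβ : 0 < β) (hγ : 0 < γ) (hω : 1 ≤ |ω|) {A B : ℝ} {Z : ℂ}
    (h : (I * ω + γ / β) * A - I * ω * β * κ * B = β * Z) :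
    1 / β * A + κ * B ≤ (2 * β / γ + 1) * ‖Z‖ := by
  have hre : γ / β * A = β * Z.re := by simpa using congrArg re h
  have him : ω * A - ω * β * κ * B = β * Z.im := by simpa using congrArg im h
  have hω0 : ω ≠ 0 := by rintro rfl; norm_num at hω
  have hA : 1 / β * A = β / γ * Z.re := by
    field_simp at hre ⊢
    linarith
  have hB : κ * B = 1 / β * A - Z.im / ω := by
    field_simp
    linear_combination -him
  have hre_le : β / γ * Z.re ≤ β / γ * ‖Z‖ := by gcongr; exact re_le_norm Z
  have him_le : -(Z.im / ω) ≤ ‖Z‖ :=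
    calc -(Z.im / ω) ≤ |Z.im| / |ω| := by rw [← abs_div]; exact neg_le_abs _
      _ ≤ |Z.im| := div_le_self (abs_nonneg _) hω
      _ ≤ ‖Z‖ := abs_im_le_norm Z
  rw [hB, hA, show (2 * β / γ + 1) * ‖Z‖ = 2 * (β / γ * ‖Z‖) + ‖Z‖ by ring]
  linarith

end Beam

theorem beam_resolvent_energy_estimate_general
    (β κ γ : ℝ) (hβ : 0 < β) (hγ : 0 < γ) (ω : ℝ) (hω : 1 ≤ |ω|)
    (u₁ u₂ : ℂ) (f f' f'' g g' g'' : ℝ → ℂ)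
    (hf' : ∀ ξ ∈ Set.Icc (0:ℝ) 1, HasDerivWithinAt f (f' ξ) (Set.Icc (0:ℝ) 1) ξ)
    (hf'' : ∀ ξ ∈ Set.Icc (0:ℝ) 1, HasDerivWithinAt f' (f'' ξ) (Set.Icc (0:ℝ) 1) ξ)
    (hg' : ∀ ξ ∈ Set.Icc (0:ℝ) 1, HasDerivWithinAt g (g' ξ) (Set.Icc (0:ℝ) 1) ξ)
    (hg'' : ∀ ξ ∈ Set.Icc (0:ℝ) 1, HasDerivWithinAt g' (g'' ξ) (Set.Icc (0:ℝ) 1) ξ)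
    (hode1 : ∀ ξ ∈ Set.Icc (0:ℝ) 1,
      (Complex.I * (ω:ℂ) + (γ:ℂ) / (β:ℂ)) * f ξ + (κ:ℂ) * g'' ξ = 0)
    (hode2 : ∀ ξ ∈ Set.Icc (0:ℝ) 1,
      -(1 / (β:ℂ)) * f'' ξ + Complex.I * (ω:ℂ) * g ξ = 0)
    (hbc1 : f 0 = (β:ℂ) * u₁) (hbc2 : f' 0 = (β:ℂ) * u₂)
    (hbc3 : g 1 = 0) (hbc4 : g' 1 = 0) :
    (1 / β) * (∫ ξ in (0:ℝ)..1, ‖f ξ‖ ^ 2) +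
        κ * (∫ ξ in (0:ℝ)..1, ‖g ξ‖ ^ 2) ≤
      (2 * β / γ + 1) *
        Real.sqrt (‖(κ:ℂ) * g' 0‖ ^ 2 + ‖-(κ:ℂ) * g 0‖ ^ 2) *
        Real.sqrt (‖u₁‖ ^ 2 + ‖u₂‖ ^ 2) := by
  have hidentity := beam_energy_identity hβ.ne' hf' hf'' hg' hg'' hode1 hode2 hbc1 hbc2 hbc3 hbc4
  have hcs := norm_mul_add_mul_le_sqrt_mul_sqrt ((κ:ℂ) * g' 0) (-(κ:ℂ) * g 0) (conj u₁) (conj u₂)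
  rw [norm_conj, norm_conj] at hcs
  calc _ ≤ (2 * β / γ + 1) * ‖(κ:ℂ) * g' 0 * conj u₁ + -(κ:ℂ) * g 0 * conj u₂‖ :=
        beam_energy_le_of_identity hβ hγ hω hidentity
    _ ≤ _ := (mul_le_mul_of_nonneg_left hcs (by positivity)).trans_eq (mul_assoc _ _ _).symm

/-- Frequency-domain resolvent estimate for the damped Euler–Bernoulli beam: for `|ω| ≥ 1`,
the squared energy norm `(1/β)∫|f|² + κ∫|g|²` of the solution is bounded by
`(2β/γ + 1)·‖(κg'(0), −κg(0))‖·‖(u₁,u₂)‖` (Euclidean norms on `ℂ²`). -/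
theorem beam_resolvent_energy_estimate
    (β κ γ : ℝ) (hβ : 0 < β) (hκ : 0 < κ) (hγ : 0 < γ) (ω : ℝ) (hω : 1 ≤ |ω|)
    (u₁ u₂ : ℂ) (f f' f'' g g' g'' : ℝ → ℂ)
    (hf' : ∀ ξ ∈ Set.Icc (0:ℝ) 1, HasDerivWithinAt f (f' ξ) (Set.Icc (0:ℝ) 1) ξ)
    (hf'' : ∀ ξ ∈ Set.Icc (0:ℝ) 1, HasDerivWithinAt f' (f'' ξ) (Set.Icc (0:ℝ) 1) ξ)
    (hg' : ∀ ξ ∈ Set.Icc (0:ℝ) 1, HasDerivWithinAt g (g' ξ) (Set.Icc (0:ℝ) 1) ξ)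
    (hg'' : ∀ ξ ∈ Set.Icc (0:ℝ) 1, HasDerivWithinAt g' (g'' ξ) (Set.Icc (0:ℝ) 1) ξ)
    (hf''c : ContinuousOn f'' (Set.Icc (0:ℝ) 1))
    (hg''c : ContinuousOn g'' (Set.Icc (0:ℝ) 1))
    (hode1 : ∀ ξ ∈ Set.Icc (0:ℝ) 1,
      (Complex.I * (ω:ℂ) + (γ:ℂ) / (β:ℂ)) * f ξ + (κ:ℂ) * g'' ξ = 0)
    (hode2 : ∀ ξ ∈ Set.Icc (0:ℝ) 1,
      -(1 / (β:ℂ)) * f'' ξ + Complex.I * (ω:ℂ) * g ξ = 0)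
    (hbc1 : f 0 = (β:ℂ) * u₁) (hbc2 : f' 0 = (β:ℂ) * u₂)
    (hbc3 : g 1 = 0) (hbc4 : g' 1 = 0) :
    (1 / β) * (∫ ξ in (0:ℝ)..1, ‖f ξ‖ ^ 2) +
        κ * (∫ ξ in (0:ℝ)..1, ‖g ξ‖ ^ 2) ≤
      (2 * β / γ + 1) *
        Real.sqrt (‖(κ:ℂ) * g' 0‖ ^ 2 + ‖-(κ:ℂ) * g 0‖ ^ 2) *
        Real.sqrt (‖u₁‖ ^ 2 + ‖u₂‖ ^ 2) :=
  beam_resolvent_energy_estimate_general β κ γ hβ hγ ω hω u₁ u₂ f f' f'' g g' g'' hf' hf'' hg' hg''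
    hode1 hode2 hbc1 hbc2 hbc3 hbc4
end

section
/- Let β, κ, γ > 0 and for ω > 0 let α(ω) = (β/κ)^{1/4}·(ω² − i(γ/β)ω)^{1/4} ∈ ℂ, where z^{1/4} = exp((1/4)·Log z) denotes the principal fourth root. Then there exist ω₀ > 0 and M > 0 such that for all ω ≥ ω₀: sinh(α(ω)) + sin(α(ω)) ≠ 0, |cos(α(ω)) / (sinh(α(ω)) + sin(α(ω)))| ≤ M, and |cosh(α(ω)) / (sinh(α(ω)) + sin(α(ω)))| ≤ M. -/
/-!
Write `α = c·w` with `c = (β/κ)^{1/4} > 0` and `w` the principal fourth root of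
`z = ω² − i(γ/β)ω`. As `Re z = ω² ≥ 0`, `|arg z| ≤ π/2`, so `w` lies in the sector
`|arg w| ≤ π/8`: `Re w ≥ ‖w‖/2 → ∞`, while Jordan's inequality `|arg z| ≤ (π/2)|Im z|/‖z‖`
with `‖z‖ = ‖w‖⁴` and `|Im z| ≤ |γ/β|·‖w‖²` gives `|Im w| ≤ (π/8)|γ/β|/‖w‖ → 0`.
So `α` eventually lies in the half-strip `Re α ≥ 4`, `|Im α| ≤ 1`, where
`‖sinh α + sin α‖ ≥ sinh (Re α) − cosh 1` dominates both `‖cos α‖ ≤ cosh 1` and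
`‖cosh α‖ ≤ sinh (Re α) + 1`.
-/

open Filter Topology
open scoped Real

/-- The characteristic wavenumber `α(ω) = (β/κ)^{1/4}·(ω² − i(γ/β)ω)^{1/4}`, where
`z^{1/4} = exp((1/4)·Log z)` is the principal fourth root. -/
noncomputable def alphaWN (β κ γ ω : ℝ) : ℂ :=
  ((β / κ) ^ ((1:ℝ)/4) : ℝ) *
    Complex.exp ((1/4 : ℂ) * Complex.log ((ω:ℂ) ^ 2 - Complex.I * ((γ:ℂ) / (β:ℂ)) * (ω:ℂ)))

lemma Real.cosh_one_le_two : Real.cosh 1 ≤ 2 := by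
  have he := Real.exp_one_lt_d9
  have hinv : Real.exp (-1) ≤ 1 := Real.exp_le_one_iff.2 (by norm_num)
  rw [Real.cosh_eq]
  linarith

namespace Complex

variable (z : ℂ)

lemma norm_cosh_le_cosh_re : ‖cosh z‖ ≤ Real.cosh z.re :=
  calc ‖cosh z‖ = ‖exp z + exp (-z)‖ / 2 := by rw [cosh, norm_div, Complex.norm_two]
    _ ≤ (‖exp z‖ + ‖exp (-z)‖) / 2 := by gcongr; exact norm_add_le _ _
    _ = Real.cosh z.re := by rw [norm_exp, norm_exp, neg_re, Real.cosh_eq]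

lemma norm_sinh_le_cosh_re : ‖sinh z‖ ≤ Real.cosh z.re :=
  calc ‖sinh z‖ = ‖exp z - exp (-z)‖ / 2 := by rw [sinh, norm_div, Complex.norm_two]
    _ ≤ (‖exp z‖ + ‖exp (-z)‖) / 2 := by gcongr; exact norm_sub_le _ _
    _ = Real.cosh z.re := by rw [norm_exp, norm_exp, neg_re, Real.cosh_eq]

lemma sinh_re_le_norm_sinh : Real.sinh z.re ≤ ‖sinh z‖ :=
  calc Real.sinh z.re = (‖exp z‖ - ‖exp (-z)‖) / 2 := by
        rw [norm_exp, norm_exp, neg_re, Real.sinh_eq]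
    _ ≤ ‖exp z - exp (-z)‖ / 2 := by gcongr; exact norm_sub_norm_le _ _
    _ = ‖sinh z‖ := by rw [sinh, norm_div, Complex.norm_two]

lemma norm_cos_le_cosh_im : ‖cos z‖ ≤ Real.cosh z.im := by
  simpa [cosh_mul_I] using norm_cosh_le_cosh_re (z * I)

lemma norm_sin_le_cosh_im : ‖sin z‖ ≤ Real.cosh z.im := by
  simpa [sinh_mul_I] using norm_sinh_le_cosh_re (z * I)

variable {z}

theorem sinh_add_sin_ne_zero_and_norm_div_le (hre : 4 ≤ z.re) (him : |z.im| ≤ 1) :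
    sinh z + sin z ≠ 0 ∧ ‖cos z / (sinh z + sin z)‖ ≤ 3 ∧ ‖cosh z / (sinh z + sin z)‖ ≤ 3 := by
  have hs : 4 ≤ Real.sinh z.re := hre.trans (Real.self_le_sinh_iff.2 (by linarith))
  have hcosh_im : Real.cosh z.im ≤ 2 :=
    (Real.cosh_le_cosh.2 (by simpa using him)).trans Real.cosh_one_le_two
  have hcosh_re : Real.cosh z.re ≤ Real.sinh z.re + 1 := by
    have := Real.cosh_sub_sinh z.re
    linarith [Real.exp_le_one_iff.2 (by linarith : -z.re ≤ 0)]
  have hsum : Real.sinh z.re - 2 ≤ ‖sinh z + sin z‖ := by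
    linarith [sinh_re_le_norm_sinh z, norm_sin_le_cosh_im z, norm_sub_le_norm_add (sinh z) (sin z)]
  have hpos : 0 < ‖sinh z + sin z‖ := by linarith
  refine ⟨norm_pos_iff.1 hpos, ?_, ?_⟩ <;> rw [norm_div, div_le_iff₀ hpos]
  · linarith [norm_cos_le_cosh_im z]
  · linarith [norm_cosh_le_cosh_re z]

/-- The principal fourth root; note `fourthRoot 0 = 1`, as `log 0 = 0`. -/
noncomputable def fourthRoot (z : ℂ) : ℂ := exp (1 / 4 * log z)

variable (z)

lemma fourthRoot_pow_four (hz : z ≠ 0) : fourthRoot z ^ 4 = z := by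
  rw [fourthRoot, ← exp_nat_mul]
  push_cast
  rw [← mul_assoc, show (4 : ℂ) * (1 / 4) = 1 by norm_num, one_mul, exp_log hz]

lemma norm_fourthRoot_pow_four (hz : z ≠ 0) : ‖fourthRoot z‖ ^ 4 = ‖z‖ := by
  rw [← norm_pow, fourthRoot_pow_four z hz]

lemma norm_fourthRoot_pos : 0 < ‖fourthRoot z‖ := norm_pos_iff.2 (exp_ne_zero _)

lemma fourthRoot_re : (fourthRoot z).re = ‖fourthRoot z‖ * Real.cos (arg z / 4) := by
  rw [fourthRoot, exp_re, norm_exp]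
  congr 2
  simp [log_im]
  ring

lemma fourthRoot_im : (fourthRoot z).im = ‖fourthRoot z‖ * Real.sin (arg z / 4) := by
  rw [fourthRoot, exp_im, norm_exp]
  congr 2
  simp [log_im]
  ring

variable {z}

lemma abs_arg_le_pi_div_two_mul (hz : 0 ≤ z.re) : |arg z| ≤ π / 2 * (|z.im| / ‖z‖) := by
  have h := Real.mul_abs_le_abs_sin (abs_arg_le_pi_div_two_iff.2 hz)
  rw [sin_arg, abs_div, abs_norm] at h
  calc |arg z| = π / 2 * (2 / π * |arg z|) := by field_simp
    _ ≤ π / 2 * (|z.im| / ‖z‖) := by gcongr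

lemma norm_div_two_le_re_fourthRoot (hz : 0 ≤ z.re) : ‖fourthRoot z‖ / 2 ≤ (fourthRoot z).re := by
  have harg : |arg z / 4| ≤ 1 := by
    rw [abs_div, abs_of_pos (by norm_num : (0:ℝ) < 4)]
    linarith [abs_arg_le_pi_div_two_iff.2 hz, Real.pi_le_four]
  have hcos : 1 / 2 ≤ Real.cos (arg z / 4) := by
    linarith [Real.one_sub_sq_div_two_le_cos (x := arg z / 4), (sq_le_one_iff_abs_le_one _).2 harg]
  rw [fourthRoot_re]
  nlinarith [norm_fourthRoot_pos z]

lemma abs_im_fourthRoot_le (hre : 0 ≤ z.re) (hz : z ≠ 0) :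
    |(fourthRoot z).im| ≤ π / 8 * |z.im| / ‖fourthRoot z‖ ^ 3 := by
  calc |(fourthRoot z).im| = ‖fourthRoot z‖ * |Real.sin (arg z / 4)| := by
        rw [fourthRoot_im, abs_mul, abs_norm]
    _ ≤ ‖fourthRoot z‖ * (|arg z| / 4) := by
        gcongr
        simpa [abs_div] using Real.abs_sin_le_abs (x := arg z / 4)
    _ ≤ ‖fourthRoot z‖ * (π / 2 * (|z.im| / ‖z‖) / 4) := by
        gcongr
        exact abs_arg_le_pi_div_two_mul hre
    _ = π / 8 * |z.im| / ‖fourthRoot z‖ ^ 3 := by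
        rw [← norm_fourthRoot_pow_four z hz]
        field_simp
        ring

end Complex

section

open Complex

variable (q ω : ℝ)

lemma sq_sub_I_mul_re : ((ω : ℂ) ^ 2 - I * q * ω).re = ω ^ 2 := by
  simp [← ofReal_pow]

lemma sq_sub_I_mul_im : ((ω : ℂ) ^ 2 - I * q * ω).im = -(q * ω) := by
  simp [← ofReal_pow]

lemma sq_sub_I_mul_ne_zero (hω : ω ≠ 0) : (ω : ℂ) ^ 2 - I * q * ω ≠ 0 := fun h => by
  have := congrArg re h
  rw [sq_sub_I_mul_re, zero_re] at this
  exact hω (pow_eq_zero_iff two_ne_zero |>.1 this)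

lemma abs_le_norm_fourthRoot_sq_sub_I_mul_sq :
    |ω| ≤ ‖fourthRoot ((ω : ℂ) ^ 2 - I * q * ω)‖ ^ 2 := by
  rcases eq_or_ne ω 0 with rfl | hω
  · simp [fourthRoot]
  have hz := sq_sub_I_mul_ne_zero q ω hω
  have h := re_le_norm ((ω : ℂ) ^ 2 - I * q * ω)
  rw [sq_sub_I_mul_re, ← norm_fourthRoot_pow_four _ hz, ← sq_abs] at h
  exact (pow_le_pow_iff_left₀ (abs_nonneg ω) (by positivity) two_ne_zero).1 (by linarith)

lemma tendsto_norm_fourthRoot_sq_sub_I_mul :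
    Tendsto (fun ω : ℝ => ‖fourthRoot ((ω : ℂ) ^ 2 - I * q * ω)‖) atTop atTop := by
  refine tendsto_atTop_mono (fun ω => ?_) Real.tendsto_sqrt_atTop
  rw [Real.sqrt_le_left (norm_nonneg _)]
  exact (le_abs_self ω).trans (abs_le_norm_fourthRoot_sq_sub_I_mul_sq q ω)

lemma abs_im_fourthRoot_sq_sub_I_mul_le (hω : ω ≠ 0) :
    |(fourthRoot ((ω : ℂ) ^ 2 - I * q * ω)).im| ≤
      π / 8 * |q| / ‖fourthRoot ((ω : ℂ) ^ 2 - I * q * ω)‖ := by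
  set z : ℂ := (ω : ℂ) ^ 2 - I * q * ω
  have hz : z ≠ 0 := sq_sub_I_mul_ne_zero q ω hω
  calc |(fourthRoot z).im| ≤ π / 8 * |z.im| / ‖fourthRoot z‖ ^ 3 :=
        abs_im_fourthRoot_le (by rw [sq_sub_I_mul_re]; positivity) hz
    _ ≤ π / 8 * (|q| * ‖fourthRoot z‖ ^ 2) / ‖fourthRoot z‖ ^ 3 := by
        rw [sq_sub_I_mul_im, abs_neg, abs_mul]
        gcongr
        exact abs_le_norm_fourthRoot_sq_sub_I_mul_sq q ω
    _ = π / 8 * |q| / ‖fourthRoot z‖ := by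
        field_simp

end

variable (β κ γ : ℝ)

lemma alphaWN_eq (ω : ℝ) : alphaWN β κ γ ω =
    ((β / κ) ^ ((1:ℝ)/4) : ℝ) * Complex.fourthRoot ((ω : ℂ) ^ 2 - Complex.I * (γ / β : ℝ) * ω) := by
  rw [alphaWN, Complex.fourthRoot, Complex.ofReal_div]

lemma tendsto_re_alphaWN (hβ : 0 < β) (hκ : 0 < κ) :
    Tendsto (fun ω => (alphaWN β κ γ ω).re) atTop atTop := by
  have hc : 0 < (β / κ) ^ ((1:ℝ)/4) := Real.rpow_pos_of_pos (div_pos hβ hκ) _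
  refine tendsto_atTop_mono (fun ω => ?_)
    (((tendsto_norm_fourthRoot_sq_sub_I_mul (γ / β)).atTop_div_const two_pos).const_mul_atTop hc)
  rw [alphaWN_eq, Complex.re_ofReal_mul]
  gcongr
  exact Complex.norm_div_two_le_re_fourthRoot (by rw [sq_sub_I_mul_re]; positivity)

lemma tendsto_im_alphaWN : Tendsto (fun ω => (alphaWN β κ γ ω).im) atTop (𝓝 0) := by
  set c : ℝ := (β / κ) ^ ((1:ℝ)/4)
  refine squeeze_zero_norm' ?_ ((tendsto_const_nhds (x := |c| * (π / 8 * |γ / β|))).div_atTop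
    (tendsto_norm_fourthRoot_sq_sub_I_mul (γ / β)))
  filter_upwards [eventually_ne_atTop 0] with ω hω
  rw [alphaWN_eq, Complex.im_ofReal_mul, norm_mul, Real.norm_eq_abs, Real.norm_eq_abs, mul_div_assoc]
  gcongr
  exact abs_im_fourthRoot_sq_sub_I_mul_le _ _ hω

theorem cos_cosh_div_sinh_add_sin_bounded_general
    (β κ γ : ℝ) (hβ : 0 < β) (hκ : 0 < κ) :
    ∃ ω₀ > (0:ℝ), ∃ M > (0:ℝ), ∀ ω : ℝ, ω₀ ≤ ω →
      Complex.sinh (alphaWN β κ γ ω) + Complex.sin (alphaWN β κ γ ω) ≠ 0 ∧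
      ‖Complex.cos (alphaWN β κ γ ω) /
          (Complex.sinh (alphaWN β κ γ ω) + Complex.sin (alphaWN β κ γ ω))‖ ≤ M ∧
      ‖Complex.cosh (alphaWN β κ γ ω) /
          (Complex.sinh (alphaWN β κ γ ω) + Complex.sin (alphaWN β κ γ ω))‖ ≤ M := by
  have hstrip : ∀ᶠ ω in atTop, 4 ≤ (alphaWN β κ γ ω).re ∧ |(alphaWN β κ γ ω).im| ≤ 1 :=
    ((tendsto_re_alphaWN β κ γ hβ hκ).eventually_ge_atTop 4).and
      ((tendsto_im_alphaWN β κ γ).abs.eventually_le_const (by norm_num : |(0:ℝ)| < 1))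
  obtain ⟨ω₁, hω₁⟩ := eventually_atTop.1 hstrip
  refine ⟨max ω₁ 1, by positivity, 3, by norm_num, fun ω hω => ?_⟩
  obtain ⟨hre, him⟩ := hω₁ ω (le_of_max_le_left hω)
  exact Complex.sinh_add_sin_ne_zero_and_norm_div_le hre him

/-- For large `ω`, `sinh(α(ω)) + sin(α(ω)) ≠ 0` and both
`|cos(α(ω))/(sinh(α(ω)) + sin(α(ω)))|` and `|cosh(α(ω))/(sinh(α(ω)) + sin(α(ω)))|`
are uniformly bounded. -/
theorem cos_cosh_div_sinh_add_sin_bounded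
    (β κ γ : ℝ) (hβ : 0 < β) (hκ : 0 < κ) (hγ : 0 < γ) :
    ∃ ω₀ > (0:ℝ), ∃ M > (0:ℝ), ∀ ω : ℝ, ω₀ ≤ ω →
      Complex.sinh (alphaWN β κ γ ω) + Complex.sin (alphaWN β κ γ ω) ≠ 0 ∧
      ‖Complex.cos (alphaWN β κ γ ω) /
          (Complex.sinh (alphaWN β κ γ ω) + Complex.sin (alphaWN β κ γ ω))‖ ≤ M ∧
      ‖Complex.cosh (alphaWN β κ γ ω) /
          (Complex.sinh (alphaWN β κ γ ω) + Complex.sin (alphaWN β κ γ ω))‖ ≤ M :=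
  cos_cosh_div_sinh_add_sin_bounded_general β κ γ hβ hκ
end

section
/- Let β, κ, γ, m > 0 and for ω > 0 let α(ω) = (β/κ)^{1/4}·(ω² − i(γ/β)ω)^{1/4} ∈ ℂ (principal fourth root z^{1/4} = exp((1/4)·Log z)), and define Q̃₁(ω) = 1 + (2κ/(m·ω²))·α(ω)³·tan(α(ω)). Then there exist ω₀ > 0 and c' > 0 such that cos(α(ω)) ≠ 0 and |Q̃₁(ω)| ≥ c' for all ω ≥ ω₀. -/
/-!
Write `α = ‖α‖ e^{iθ}`, so that `Q̃₁ = 1 + K e^{3iθ} tan α` with `K = 2κ‖α‖³/(mω²) > 0`.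
Since `α⁴ = (βω² − iγω)/κ`, we get `θ → 0` and `‖α‖² ≤ √(2β/κ) ω` for `ω ≥ γ/β`, and the
elementary bound `|Im α⁴| ≤ 4 |Im α| ‖α‖³` turns this into a positive lower bound for `−Im α / K`.
On the other hand, for `Y = −Im z ≥ 0` one has `Y (Re tan z)² ≤ −Im tan z`. Rotating by
`e^{−3iθ}`, either `Re (e^{−3iθ} + K tan α) ≥ 1/4`, or `K |Re tan α| ≥ 1/4`, and then
`−Im (e^{−3iθ} + K tan α) ≥ Y/(16K) + sin 3θ`, which stays bounded away from `0`.
-/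

open Complex ComplexConjugate Filter Topology

namespace Complex

theorem sin_eq_re_add_im (z : ℂ) :
    sin z = (Real.sin z.re * Real.cosh z.im : ℝ) + (Real.cos z.re * Real.sinh z.im : ℝ) * I := by
  rw [sin_eq]; push_cast; ring

theorem cos_eq_re_sub_im (z : ℂ) :
    cos z = (Real.cos z.re * Real.cosh z.im : ℝ) - (Real.sin z.re * Real.sinh z.im : ℝ) * I := by
  rw [cos_eq]; push_cast; ring

theorem sin_mul_conj_cos (z : ℂ) : sin z * conj (cos z) =
    (Real.sin z.re * Real.cos z.re : ℝ) + (Real.sinh z.im * Real.cosh z.im : ℝ) * I := by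
  apply Complex.ext <;>
    simp only [sin_eq_re_add_im, cos_eq_re_sub_im, mul_re, mul_im, add_re, add_im, sub_re, sub_im,
      ofReal_re, ofReal_im, I_re, I_im, conj_re, conj_im]
  · linear_combination (Real.sin z.re * Real.cos z.re) * Real.cosh_sq_sub_sinh_sq z.im
  · linear_combination (Real.sinh z.im * Real.cosh z.im) * Real.sin_sq_add_cos_sq z.re

theorem normSq_cos (z : ℂ) : normSq (cos z) = Real.cos z.re ^ 2 + Real.sinh z.im ^ 2 := by
  rw [cos_eq_re_sub_im, normSq_apply]
  simp only [sub_re, sub_im, mul_re, mul_im, ofReal_re, ofReal_im, I_re, I_im]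
  linear_combination Real.cos z.re ^ 2 * Real.cosh_sq_sub_sinh_sq z.im
    + Real.sinh z.im ^ 2 * Real.sin_sq_add_cos_sq z.re

theorem im_mul_re_tan_sq_le_im_tan {z : ℂ} (hz : 0 ≤ z.im) :
    z.im * (tan z).re ^ 2 ≤ (tan z).im := by
  set N := normSq (cos z)
  have htan : tan z = sin z * conj (cos z) * (N⁻¹ : ℝ) := by
    rw [tan, div_eq_mul_inv, inv_def, mul_assoc]
  rw [htan, sin_mul_conj_cos, re_mul_ofReal, im_mul_ofReal]
  simp only [add_re, add_im, mul_re, mul_im, ofReal_re, ofReal_im, I_re, I_im, mul_zero, mul_one,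
    sub_zero, add_zero, zero_add]
  set x := z.re
  set y := z.im
  have hsinh : 0 ≤ Real.sinh y := Real.sinh_nonneg_iff.2 hz
  have hN : N = Real.cos x ^ 2 + Real.sinh y ^ 2 := normSq_cos z
  have hnum : y * (Real.sin x * Real.cos x) ^ 2 ≤ Real.sinh y * Real.cosh y * N := by
    calc y * (Real.sin x * Real.cos x) ^ 2 = y * Real.sin x ^ 2 * Real.cos x ^ 2 := by ring
      _ ≤ Real.sinh y * Real.cosh y * Real.cos x ^ 2 := by
        refine mul_le_mul_of_nonneg_right ?_ (sq_nonneg _)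
        calc y * Real.sin x ^ 2 ≤ Real.sinh y * 1 :=
              mul_le_mul (Real.self_le_sinh_iff.2 hz) (Real.sin_sq_le_one x) (sq_nonneg _) hsinh
          _ ≤ Real.sinh y * Real.cosh y := mul_le_mul_of_nonneg_left (Real.one_le_cosh y) hsinh
      _ ≤ _ := mul_le_mul_of_nonneg_left (hN ▸ le_add_of_nonneg_right (sq_nonneg _))
                (mul_nonneg hsinh (Real.cosh_pos y).le)
  rcases (normSq_nonneg (cos z)).eq_or_lt with hN0 | hNpos
  · simp [N, ← hN0]
  · calc y * (Real.sin x * Real.cos x * N⁻¹) ^ 2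
          = y * (Real.sin x * Real.cos x) ^ 2 * N⁻¹ * N⁻¹ := by ring
      _ ≤ Real.sinh y * Real.cosh y * N * N⁻¹ * N⁻¹ := by gcongr
      _ = Real.sinh y * Real.cosh y * N⁻¹ := by field_simp

theorem neg_im_mul_re_tan_sq_le_neg_im_tan {z : ℂ} (hz : z.im ≤ 0) :
    -z.im * (tan z).re ^ 2 ≤ -(tan z).im := by
  simpa [tan_conj] using im_mul_re_tan_sq_le_im_tan (z := conj z) (by simpa using hz)

theorem cos_ne_zero_of_im_ne_zero {z : ℂ} (hz : z.im ≠ 0) : cos z ≠ 0 := fun h => by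
  obtain ⟨k, rfl⟩ := cos_eq_zero_iff.1 h
  simp at hz

theorem pow_eq_norm_pow_mul_exp (w : ℂ) (n : ℕ) : w ^ n = ‖w‖ ^ n * exp (n * arg w * I) := by
  conv_lhs => rw [← norm_mul_exp_arg_mul_I w]
  rw [mul_pow, ← exp_nat_mul]
  ring_nf

theorem abs_im_pow_succ_le (w : ℂ) (n : ℕ) :
    |(w ^ (n + 1)).im| ≤ (n + 1) * |w.im| * ‖w‖ ^ n := by
  induction n with
  | zero => simp
  | succ n ih =>
    rw [pow_succ, mul_im, pow_succ]
    calc |(w ^ (n + 1)).re * w.im + (w ^ (n + 1)).im * w.re|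
        ≤ ‖w ^ (n + 1)‖ * |w.im| + (n + 1) * |w.im| * ‖w‖ ^ n * ‖w‖ := by
          refine (abs_add_le _ _).trans (add_le_add ?_ ?_) <;> rw [abs_mul]
          · exact mul_le_mul_of_nonneg_right (abs_re_le_norm _) (abs_nonneg _)
          · exact mul_le_mul ih (abs_re_le_norm w) (abs_nonneg _) (by positivity)
      _ = _ := by rw [norm_pow]; push_cast; ring

theorem tendsto_arg_sq_sub_I_mul (g : ℂ) :
    Tendsto (fun ω : ℝ => arg ((ω : ℂ) ^ 2 - I * g * ω)) atTop (𝓝 0) := by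
  have hlim : Tendsto (fun ω : ℝ => 1 - I * g * ((ω⁻¹ : ℝ) : ℂ)) atTop (𝓝 1) := by
    simpa using ((continuous_ofReal.tendsto 0).comp tendsto_inv_atTop_zero).const_mul (I * g)
      |>.const_sub 1
  have harg : ∀ᶠ ω : ℝ in atTop,
      arg (1 - I * g * ((ω⁻¹ : ℝ) : ℂ)) = arg ((ω : ℂ) ^ 2 - I * g * ω) := by
    filter_upwards [eventually_gt_atTop 0] with ω hω
    rw [← arg_real_mul _ (pow_pos hω 2)]
    congr 1
    have hω' : (ω : ℂ) ≠ 0 := ofReal_ne_zero.2 hω.ne'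
    push_cast
    field_simp
  simpa [arg_one] using ((continuousAt_arg one_mem_slitPlane).tendsto.comp hlim).congr' harg

theorem le_norm_one_add_mul_exp_mul {K Y φ : ℝ} {t : ℂ} (hK : 0 < K) (hY : 0 ≤ Y)
    (hφ : 1 / 2 ≤ Real.cos φ) (ht : Y * t.re ^ 2 ≤ -t.im) :
    min (1 / 4) (Y / K / 16 + Real.sin φ) ≤ ‖1 + K * exp (φ * I) * t‖ := by
  have hrot : ‖1 + K * exp (φ * I) * t‖ = ‖exp (-φ * I) + K * t‖ := by
    rw [← one_mul ‖1 + _‖, ← norm_exp_ofReal_mul_I (-φ), ← norm_mul]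
    have hunit : exp (-φ * I) * exp (φ * I) = 1 := by rw [← exp_add]; simp
    congr 1
    push_cast
    linear_combination (K * t) * hunit
  have hre : (exp (-φ * I) + K * t).re = Real.cos φ + K * t.re := by
    rw [← ofReal_neg, exp_mul_I]; simp [← ofReal_cos, ← ofReal_sin]
  have him : (exp (-φ * I) + K * t).im = -Real.sin φ + K * t.im := by
    rw [← ofReal_neg, exp_mul_I]; simp [← ofReal_cos, ← ofReal_sin]
  rw [hrot]
  by_cases hsmall : 1 / 4 ≤ |Real.cos φ + K * t.re|
  · exact (min_le_left _ _).trans (hre ▸ hsmall |>.trans (abs_re_le_norm _))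
  · have hKt : 1 / 16 ≤ (K * t.re) ^ 2 := by
      have := (abs_lt.1 (not_le.1 hsmall)).2
      nlinarith
    have hYK : Y / K / 16 ≤ K * -t.im := by
      rw [div_div, div_le_iff₀ (by positivity)]
      calc Y = Y * 1 := (mul_one Y).symm
        _ ≤ Y * (16 * (K * t.re) ^ 2) := by gcongr; linarith
        _ = 16 * K * K * (Y * t.re ^ 2) := by ring
        _ ≤ 16 * K * K * -t.im := by gcongr
        _ = K * -t.im * (K * 16) := by ring
    calc min (1 / 4) (Y / K / 16 + Real.sin φ) ≤ Y / K / 16 + Real.sin φ := min_le_right _ _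
      _ ≤ -(exp (-φ * I) + K * t).im := by rw [him]; linarith
      _ ≤ ‖exp (-φ * I) + K * t‖ := (neg_le_abs _).trans (abs_im_le_norm _)

end Complex

section
variable {β κ γ : ℝ}

theorem alphaWN_ne_zero (hβκ : 0 < β / κ) (ω : ℝ) : alphaWN β κ γ ω ≠ 0 :=
  mul_ne_zero (ofReal_ne_zero.2 (Real.rpow_pos_of_pos hβκ _).ne') (exp_ne_zero _)

theorem alphaWN_pow_four (hβ : 0 < β) (hκ : 0 < κ) {ω : ℝ} (hω : ω ≠ 0) :
    alphaWN β κ γ ω ^ 4 = (β * ω ^ 2 - γ * ω * I) / κ := by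
  have hz : (ω : ℂ) ^ 2 - I * (γ / β) * ω ≠ 0 := fun h => by
    simpa [← ofReal_pow, ← ofReal_div, hω] using congrArg re h
  have ha : (((β / κ) ^ ((1 : ℝ) / 4) : ℝ) : ℂ) ^ 4 = β / κ := by
    rw [← ofReal_pow, one_div, ← Real.rpow_natCast, ← Real.rpow_mul (by positivity)]
    norm_num
  rw [alphaWN, mul_pow, ha, ← exp_nat_mul, ← mul_assoc,
    show ((4 : ℕ) : ℂ) * (1 / 4) = 1 by norm_num, one_mul, exp_log hz]
  have hβ' : (β : ℂ) ≠ 0 := ofReal_ne_zero.2 hβ.ne'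
  field_simp

theorem arg_alphaWN (hβκ : 0 < β / κ) (ω : ℝ) :
    arg (alphaWN β κ γ ω) = arg ((ω : ℂ) ^ 2 - I * (γ / β) * ω) / 4 := by
  set z := (ω : ℂ) ^ 2 - I * (γ / β) * ω
  have him : ((1 / 4 : ℂ) * log z).im = arg z / 4 := by
    rw [show (1 / 4 : ℂ) = ((1 / 4 : ℝ) : ℂ) by norm_num, im_ofReal_mul, log_im]
    ring
  rw [alphaWN, arg_real_mul _ (Real.rpow_pos_of_pos hβκ _), ← log_im,
    log_exp (by rw [him]; linarith [neg_pi_lt_arg z, Real.pi_pos])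
      (by rw [him]; linarith [arg_le_pi z, Real.pi_pos]), him]

theorem tendsto_arg_alphaWN (hβκ : 0 < β / κ) :
    Tendsto (fun ω => arg (alphaWN β κ γ ω)) atTop (𝓝 0) := by
  simpa [arg_alphaWN hβκ] using (tendsto_arg_sq_sub_I_mul _).div_const 4

theorem eventually_cos_sin_three_arg_alphaWN (hβκ : 0 < β / κ) {ε : ℝ} (hε : 0 < ε) :
    ∀ᶠ ω in atTop, 1 / 2 ≤ Real.cos (3 * arg (alphaWN β κ γ ω)) ∧
      -ε ≤ Real.sin (3 * arg (alphaWN β κ γ ω)) := by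
  have hφ : Tendsto (fun ω => 3 * arg (alphaWN β κ γ ω)) atTop (𝓝 0) := by
    simpa using (tendsto_arg_alphaWN hβκ).const_mul 3
  exact (((Real.continuous_cos.tendsto' 0 1 (by simp)).comp hφ).eventually
      (eventually_ge_nhds (by norm_num))).and
    (((Real.continuous_sin.tendsto' 0 0 (by simp)).comp hφ).eventually
      (eventually_ge_nhds (by linarith)))

theorem im_alphaWN_neg (hβ : 0 < β) (hκ : 0 < κ) (hγ : 0 < γ) {ω : ℝ} (hω : 0 < ω) :
    (alphaWN β κ γ ω).im < 0 := by
  rw [← arg_neg_iff, arg_alphaWN (by positivity)]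
  have : ((ω : ℂ) ^ 2 - I * (γ / β) * ω).im < 0 := by
    simpa [← ofReal_div, ← ofReal_pow] using mul_pos (div_pos hγ hβ) hω
  linarith [arg_neg_iff.2 this]

theorem norm_alphaWN_pow_four_le (hβ : 0 < β) (hκ : 0 < κ) (hγ : 0 ≤ γ) {ω : ℝ} (hω : 0 < ω)
    (hωγ : γ ≤ β * ω) : ‖alphaWN β κ γ ω‖ ^ 4 ≤ 2 * β * ω ^ 2 / κ := by
  rw [← norm_pow, alphaWN_pow_four hβ hκ hω.ne', norm_div, norm_real, Real.norm_of_nonneg hκ.le]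
  gcongr
  calc ‖(β : ℂ) * ω ^ 2 - γ * ω * I‖ ≤ ‖(β : ℂ) * ω ^ 2‖ + ‖(γ : ℂ) * ω * I‖ := norm_sub_le _ _
    _ = β * ω ^ 2 + γ * ω := by
      simp [abs_of_pos hβ, abs_of_pos hω, abs_of_nonneg hγ]
    _ ≤ 2 * β * ω ^ 2 := by nlinarith

theorem le_neg_im_alphaWN_mul (hβ : 0 < β) (hκ : 0 < κ) (hγ : 0 < γ) {ω : ℝ} (hω : 0 < ω) :
    γ * ω / κ ≤ 4 * -(alphaWN β κ γ ω).im * ‖alphaWN β κ γ ω‖ ^ 3 := by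
  have h := abs_im_pow_succ_le (alphaWN β κ γ ω) 3
  rw [alphaWN_pow_four hβ hκ hω.ne', abs_of_neg (im_alphaWN_neg hβ hκ hγ hω)] at h
  have him : ((β * ω ^ 2 - γ * ω * I) / κ : ℂ).im = -(γ * ω / κ) := by
    simp [← ofReal_pow, ← ofReal_mul, div_ofReal_im, neg_div]
  rw [him, abs_neg, abs_of_pos (by positivity)] at h
  linarith

theorem mul_norm_alphaWN_pow_three_le (hβ : 0 < β) (hκ : 0 < κ) (hγ : 0 < γ) {ω : ℝ}
    (hω : 0 < ω) (hωγ : γ ≤ β * ω) :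
    γ * ‖alphaWN β κ γ ω‖ ^ 3 ≤ 4 * κ * √(2 * β / κ) ^ 3 * ω ^ 2 * -(alphaWN β κ γ ω).im := by
  set α := alphaWN β κ γ ω
  set b := √(2 * β / κ)
  have hα : 0 < ‖α‖ := norm_pos_iff.2 (alphaWN_ne_zero (by positivity) ω)
  have him : γ * ω ≤ κ * (4 * -α.im * ‖α‖ ^ 3) :=
    (div_le_iff₀' hκ).1 (le_neg_im_alphaWN_mul hβ hκ hγ hω)
  have hnorm : ‖α‖ ^ 2 ≤ b * ω := by
    refine (pow_le_pow_iff_left₀ (by positivity) (by positivity) two_ne_zero).1 ?_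
    rw [mul_pow, Real.sq_sqrt (by positivity), ← pow_mul]
    calc ‖α‖ ^ 4 ≤ 2 * β * ω ^ 2 / κ := norm_alphaWN_pow_four_le hβ hκ hγ.le hω hωγ
      _ = 2 * β / κ * ω ^ 2 := by ring
  refine le_of_mul_le_mul_right ?_ (mul_pos hω (pow_pos hα 3))
  calc γ * ‖α‖ ^ 3 * (ω * ‖α‖ ^ 3) = γ * ω * (‖α‖ ^ 2) ^ 3 := by ring
    _ ≤ κ * (4 * -α.im * ‖α‖ ^ 3) * (b * ω) ^ 3 := by
      gcongr
      exact (mul_pos hγ hω).le.trans him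
    _ = _ := by ring

theorem le_neg_im_alphaWN_div (hβ : 0 < β) (hκ : 0 < κ) (hγ : 0 < γ) {m : ℝ} (hm : 0 < m)
    {ω : ℝ} (hω : 0 < ω) (hωγ : γ ≤ β * ω) :
    γ * m / (8 * κ ^ 2 * √(2 * β / κ) ^ 3) ≤
      -(alphaWN β κ γ ω).im / (2 * κ * ‖alphaWN β κ γ ω‖ ^ 3 / (m * ω ^ 2)) := by
  have hbound := mul_norm_alphaWN_pow_three_le hβ hκ hγ hω hωγ
  set α := alphaWN β κ γ ω
  set b := √(2 * β / κ)
  have hα : 0 < ‖α‖ := norm_pos_iff.2 (alphaWN_ne_zero (by positivity) ω)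
  rw [le_div_iff₀ (by positivity)]
  calc γ * m / (8 * κ ^ 2 * b ^ 3) * (2 * κ * ‖α‖ ^ 3 / (m * ω ^ 2))
        = γ * ‖α‖ ^ 3 / (4 * κ * b ^ 3 * ω ^ 2) := by field_simp; ring
    _ ≤ -α.im := by rw [div_le_iff₀ (by positivity)]; linarith

end

/-- Uniform lower bound for `Q̃₁(ω) = 1 + (2κ/(mω²))α(ω)³ tan(α(ω))`: there exist
`ω₀, c' > 0` such that `cos(α(ω)) ≠ 0` and `|Q̃₁(ω)| ≥ c'` for all `ω ≥ ω₀`. -/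
theorem Q1tilde_lower_bound (β κ γ m : ℝ) (hβ : 0 < β) (hκ : 0 < κ) (hγ : 0 < γ)
    (hm : 0 < m) :
    ∃ ω₀ > (0:ℝ), ∃ c' > (0:ℝ), ∀ ω : ℝ, ω₀ ≤ ω →
      Complex.cos (alphaWN β κ γ ω) ≠ 0 ∧
      c' ≤ ‖(1 + (2 * (κ:ℂ) / ((m:ℂ) * (ω:ℂ) ^ 2)) * (alphaWN β κ γ ω) ^ 3 *
        Complex.tan (alphaWN β κ γ ω))‖ := by
  set C := γ * m / (8 * κ ^ 2 * √(2 * β / κ) ^ 3)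
  have hC : 0 < C := by positivity
  obtain ⟨ω₀, hω₀⟩ := eventually_atTop.1 <| eventually_cos_sin_three_arg_alphaWN (γ := γ)
    (by positivity : 0 < β / κ) (by positivity : 0 < C / 32)
  refine ⟨max ω₀ (γ / β), lt_max_of_lt_right (by positivity), min (1 / 4) (C / 32),
    by positivity, fun ω hω => ?_⟩
  obtain ⟨hcos, hsin⟩ := hω₀ ω (le_of_max_le_left hω)
  have hωγ : γ ≤ β * ω := (div_le_iff₀' hβ).1 (le_of_max_le_right hω)
  have hω : 0 < ω := (div_pos hγ hβ).trans_le (le_of_max_le_right hω)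
  have hC_le := le_neg_im_alphaWN_div hβ hκ hγ hm hω hωγ
  set α := alphaWN β κ γ ω
  have hY : α.im < 0 := im_alphaWN_neg hβ hκ hγ hω
  refine ⟨cos_ne_zero_of_im_ne_zero hY.ne, ?_⟩
  have hα : 0 < ‖α‖ := norm_pos_iff.2 (alphaWN_ne_zero (by positivity) ω)
  set K := 2 * κ * ‖α‖ ^ 3 / (m * ω ^ 2) with hK_def
  calc min (1 / 4) (C / 32) ≤ min (1 / 4) (-α.im / K / 16 + Real.sin (3 * arg α)) :=
        min_le_min_left _ (by linarith)
    _ ≤ ‖1 + K * exp ((3 * arg α : ℝ) * I) * tan α‖ :=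
        le_norm_one_add_mul_exp_mul (by positivity) (neg_nonneg.2 hY.le) hcos
          (neg_im_mul_re_tan_sq_le_neg_im_tan hY.le)
    _ = _ := by rw [pow_eq_norm_pow_mul_exp α 3, hK_def]; push_cast; ring_nf
end
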